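/- arXiv:1603.03272 — 5 statements merged into one kernel-verified Lean document; each statement's English description precedes it below -/
import Mathlib

section
/- Let C be a category and let Arr(C) denote the type of all morphisms of C, i.e. triples (X, Y, f) where X and Y are objects of C and f : X ⟶ Y. Suppose that for every object B of C, the constant family indexed by Arr(C) with value B admits a product in C (equivalently, C has limits of shape the discrete category on Arr(C)). Then C is a preorder, i.e. any two parallel morphisms f, g : A ⟶ B of C are equal. -/
/-! If `f ≠ g : A ⟶ B`, sending `S ⊆ Arr C` to the morphism `A ⟶ ∏ B` with components `f` on `S`
and `g` off `S` embeds `Set (Arr C)` into `Arr C`, which Cantor's theorem forbids. -/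

open CategoryTheory CategoryTheory.Limits

theorem CategoryTheory.Limits.Pi.lift_injective {C : Type*} [Category C] {β : Type*}
    {f : β → C} [HasProduct f] {P : C} :
    Function.Injective (Pi.lift : (∀ b, P ⟶ f b) → (P ⟶ ∏ᶜ f)) := fun p q hpq =>
  funext fun b => by simpa using congr($hpq ≫ Pi.π f b)

open Classical in
theorem Set.injective_ite_mem {α β : Type*} {x y : β} (hxy : x ≠ y) :
    Function.Injective fun (S : Set α) (a : α) => if a ∈ S then x else y := by
  intro S T hST
  ext a
  have := congr_fun hST a
  by_cases ha : a ∈ S <;> by_cases hb : a ∈ T <;> simp_all [eq_comm]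

theorem CategoryTheory.sigma_hom_mk_injective {C : Type*} [Category C] (A B : C) :
    Function.Injective fun φ : A ⟶ B => (⟨A, B, φ⟩ : Σ (X : C) (Y : C), X ⟶ Y) :=
  sigma_mk_injective.comp sigma_mk_injective

/-- If a category `C` has products of constant families indexed by its type of
all morphisms `Arr C = Σ (X Y : C), X ⟶ Y`, then `C` is a preorder: any two
parallel morphisms are equal. -/
theorem preorder_of_hasProduct_arr {C : Type u} [Category.{v} C]
    (h : ∀ B : C, HasProduct (fun _ : (Σ (X : C) (Y : C), X ⟶ Y) => B)) :
    ∀ (A B : C) (f g : A ⟶ B), f = g := by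
  intro A B f g
  by_contra hfg
  have := h B
  exact Function.cantor_injective _ <|
    (sigma_hom_mk_injective A _).comp (Pi.lift_injective.comp (Set.injective_ite_mem hfg))
end

section
/- Let C be a category, I a type, and A, B objects of C. Suppose f, g : A ⟶ B are two distinct morphisms, and suppose (P, (π_i : P ⟶ B)_{i ∈ I}) is a product in C of the constant family indexed by I with value B. Then there is an injection from the type of functions I → Bool into the hom-type A ⟶ P. (Consequently 2^{#I} ≤ #(A ⟶ P).) -/
open CategoryTheory

theorem injective_of_lift_comp_eq {C : Type*} [Category C] {I : Type*} {N P : C} {B : I → C}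
    (π : ∀ i, P ⟶ B i) (lift : (∀ i, N ⟶ B i) → (N ⟶ P))
    (lift_comp : ∀ n i, lift n ≫ π i = n i) : Function.Injective lift :=
  Function.LeftInverse.injective (g := fun v i => v ≫ π i) fun n => funext (lift_comp n)

/-- If `f ≠ g : A ⟶ B` and `P` with projections `π i : P ⟶ B` (`i : I`) is a
product of the constant family with value `B`, then there is an injection from
`I → Bool` into the hom-type `A ⟶ P`. -/
theorem embedding_bool_functions_of_product {C : Type u} [Category.{v} C]
    {I : Type w} {A B P : C} (f g : A ⟶ B) (hfg : f ≠ g)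
    (π : I → (P ⟶ B))
    (hP : ∀ (N : C) (n : I → (N ⟶ B)), ∃! v : N ⟶ P, ∀ i, v ≫ π i = n i) :
    Nonempty ((I → Bool) ↪ (A ⟶ P)) := by
  choose lift lift_comp _ using hP A
  have cond_injective : Function.Injective fun b : Bool => cond b g f := Bool.injective_iff.2 hfg
  exact ⟨⟨fun S => lift ((fun b => cond b g f) ∘ S),
    (injective_of_lift_comp_eq π lift lift_comp).comp cond_injective.comp_left⟩⟩
end

section
/- (Erdős–Rado) Let λ be an infinite cardinal and n a natural number. Define the iterated beth numbers over λ by ℶ_0(λ) = λ and ℶ_{k+1}(λ) = 2^{ℶ_k(λ)}. Let X be a type with #X ≥ (ℶ_n(λ))⁺, and let f be a function from the (n+1)-element finite subsets of X into a type of colors of cardinality at most λ. Then there exist a subset H ⊆ X with #H ≥ λ⁺ and a color γ such that f(s) = γ for every (n+1)-element subset s of H. -/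
open Cardinal

/-- The `k`-fold iterated beth number over a base cardinal `l`:
`ℶ_0(l) = l` and `ℶ_{k+1}(l) = 2 ^ ℶ_k(l)`. -/
def bethIter (l : Cardinal.{u}) : ℕ → Cardinal.{u}
  | 0 => l
  | k + 1 => 2 ^ bethIter l k

/-!
Induction on `n`; for `n = 0` this is the pigeonhole principle for the regular cardinal `l⁺`.

For the step let `μ = ℶ_n(l)` and let `F` colour finite sets. The type of a point `x` over a set
`S` is `t ↦ F (t ∪ {x})` (`t ⊆ S` finite); over `|S| ≤ μ` there are at most `l ^ μ ≤ 2 ^ μ` types,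
and a set of size `2 ^ μ` has `(2 ^ μ) ^ μ = 2 ^ μ` subsets of size `μ`. Hence some `A` of size
`2 ^ μ` realises every type realised outside `S` over each of its subsets `S` of size `μ`: since
`μ⁺` is regular, closing off in `μ⁺` rounds suffices. Fix `p ∉ A` and choose by recursion
`b_w ∈ A`, `w < μ⁺`, realising the type of `p` over `{b_v | v < w}`. Then
`F (t ∪ {b_w}) = F (t ∪ {p})` whenever `t` lies below `w`, so a set of size `l⁺` homogeneous for
the colouring `t ↦ F (t ∪ {p})` of the `(n+1)`-sets of `{b_w}`, given by induction, is homogeneous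
for `F` on `(n+2)`-sets.
-/

open Set

universe u

namespace Cardinal

variable {μ κ : Cardinal.{u}}

theorem mk_finset_le_of_mk_le {α : Type u} (hμ : ℵ₀ ≤ μ) (hα : #α ≤ μ) : #(Finset α) ≤ μ := by
  classical
  calc #(Finset α) ≤ #(List α) := mk_le_of_surjective List.toFinset_surjective
    _ ≤ μ := (mk_list_le_max α).trans (max_le hμ hα)

theorem mk_iUnion_le_of_le {α ι : Type u} {f : ι → Set α} (hκ : ℵ₀ ≤ κ) (hι : #ι ≤ κ)
    (hf : ∀ i, #(f i) ≤ κ) : #(⋃ i, f i) ≤ κ :=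
  calc #(⋃ i, f i) ≤ sum fun i => #(f i) := mk_iUnion_le_sum_mk
    _ ≤ sum fun _ : ι => κ := sum_le_sum _ _ hf
    _ = #ι * κ := sum_const' ι κ
    _ ≤ κ := mul_le_of_le hκ hι le_rfl

theorem mk_Iio_succ_ord_toType_le (w : (Order.succ μ).ord.ToType) : #(Iio w) ≤ μ :=
  Order.lt_succ_iff.1 (by simpa using mk_Iio_lt w)

theorem exists_forall_lt_of_mk_le (hμ : ℵ₀ ≤ μ) {S : Set (Order.succ μ).ord.ToType}
    (hS : #S ≤ μ) : ∃ w, ∀ v ∈ S, v < w := by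
  have hcof : #S < Order.cof (Order.succ μ).ord.ToType := by
    rw [Ordinal.cof_toType, (isRegular_succ hμ).cof_ord]
    exact hS.trans_lt (Order.lt_succ μ)
  by_contra! h
  exact hcof.not_ge (Order.cof_le fun w => by simpa using h w)

theorem exists_closed_of_power_eq_self {X : Type u} (hμ : ℵ₀ ≤ μ) (hμκ : μ < κ) (hκ : κ ^ μ = κ)
    (W : Set X → Set X) (hW : ∀ S : Set X, #S ≤ μ → #(W S) ≤ κ) :
    ∃ A : Set X, #A ≤ κ ∧ ∀ S ⊆ A, #S ≤ μ → W S ⊆ A := by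
  have hκ₀ : ℵ₀ ≤ κ := hμ.trans hμκ.le
  let next (B : Set X) : Set X := ⋃ S : {S : Set X // S ⊆ B ∧ #S ≤ μ}, W S
  have mk_next_le (B : Set X) (hB : #B ≤ κ) : #(next B) ≤ κ := by
    refine mk_iUnion_le_of_le hκ₀ ((mk_bounded_subset_le B μ).trans ?_) fun S => hW S S.2.2
    exact hκ ▸ power_le_power_right (max_le hB hκ₀)
  let I := (Order.succ μ).ord.ToType
  let stage : I → Set X := wellFounded_lt.fix fun w ih => next (⋃ v : Iio w, ih v v.2)
  have stage_eq (w : I) : stage w = next (⋃ v : Iio w, stage v) := wellFounded_lt.fix_eq _ w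
  have mk_stage_le (w : I) : #(stage w) ≤ κ := by
    induction w using WellFoundedLT.induction with
    | _ w ih =>
      rw [stage_eq]
      exact mk_next_le _ (mk_iUnion_le_of_le hκ₀ ((mk_Iio_succ_ord_toType_le w).trans hμκ.le)
        fun v => ih v v.2)
  refine ⟨⋃ w, stage w, mk_iUnion_le_of_le hκ₀ ?_ mk_stage_le, fun S hSA hS => ?_⟩
  · simpa [I] using hμκ
  choose idx hidx using fun x : S => mem_iUnion.1 (hSA x.2)
  obtain ⟨w, hw⟩ := exists_forall_lt_of_mk_le hμ (mk_range_le.trans hS)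
  have hSw : S ⊆ ⋃ v : Iio w, stage v := fun x hx =>
    mem_iUnion.2 ⟨⟨idx ⟨x, hx⟩, hw _ ⟨_, rfl⟩⟩, hidx ⟨x, hx⟩⟩
  refine Subset.trans ?_ (subset_iUnion _ w)
  rw [stage_eq]
  exact subset_iUnion_of_subset ⟨S, hSw, hS⟩ subset_rfl

theorem exists_seq_forall_image_Iio {X : Type u} {A : Set X} {P : Set X → X → Prop}
    (hA : ∀ S ⊆ A, #S ≤ μ → ∃ x ∈ A, P S x) :
    ∃ b : (Order.succ μ).ord.ToType → X, ∀ w, P (b '' Iio w) (b w) := by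
  have : Nonempty X := ⟨(hA ∅ (empty_subset A) (by simp)).choose⟩
  choose! pick hpickA hpickP using hA
  let b : (Order.succ μ).ord.ToType → X :=
    wellFounded_lt.fix fun w ih => pick (range fun v : Iio w => ih v v.2)
  have b_eq (w) : b w = pick (b '' Iio w) := by
    rw [image_eq_range]; exact wellFounded_lt.fix_eq _ w
  have b_mem (w) : b w ∈ A := by
    induction w using WellFoundedLT.induction with
    | _ w ih =>
      rw [b_eq]
      exact hpickA _ (image_subset_iff.2 ih) (mk_image_le.trans (mk_Iio_succ_ord_toType_le w))
  refine ⟨b, fun w => b_eq w ▸ hpickP _ ?_ ?_⟩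
  · exact image_subset_iff.2 fun v _ => b_mem v
  · exact mk_image_le.trans (mk_Iio_succ_ord_toType_le w)

theorem mk_finset_arrow_le {α C : Type u} (hμ : ℵ₀ ≤ μ) (hα : #α ≤ μ) (hC : #C ≤ μ) :
    #(Finset α → C) ≤ 2 ^ μ :=
  calc #(Finset α → C) = #C ^ #(Finset α) := (power_def C (Finset α)).symm
    _ ≤ μ ^ #(Finset α) := power_le_power_right hC
    _ ≤ μ ^ μ := power_le_power_left (aleph0_pos.trans_le hμ).ne' (mk_finset_le_of_mk_le hμ hα)
    _ = 2 ^ μ := power_self_eq hμ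

end Cardinal

theorem le_bethIter (l : Cardinal.{u}) : ∀ n, l ≤ bethIter l n
  | 0 => le_rfl
  | n + 1 => (le_bethIter l n).trans (cantor _).le

theorem exists_endHomogeneous {μ : Cardinal.{u}} (hμ : ℵ₀ ≤ μ) {X C : Type u} [DecidableEq X]
    (hC : #C ≤ μ) (hX : 2 ^ μ < #X) (F : Finset X → C) :
    ∃ (b : (Order.succ μ).ord.ToType → X) (p : X), Function.Injective b ∧
      ∀ w (t : Finset X), ↑t ⊆ b '' Iio w → F (insert (b w) t) = F (insert p t) := by
  classical
  have : Nonempty X := mk_ne_zero_iff.1 (zero_le.trans_lt hX).ne'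
  let typeOver (S : Set X) (x : X) : Finset S → C :=
    fun t => F (insert x (t.map (Function.Embedding.subtype (· ∈ S))))
  let realisers (S : Set X) : Set X := Function.invFunOn (typeOver S) Sᶜ '' range (typeOver S)
  obtain ⟨A, hA, hA_closed⟩ := exists_closed_of_power_eq_self hμ (cantor μ)
    (by rw [← power_mul, mul_eq_self hμ]) realisers
    fun S hS => mk_image_le.trans ((mk_set_le _).trans (mk_finset_arrow_le hμ hS hC))
  obtain ⟨p, hp⟩ : ∃ p, p ∉ A := by
    by_contra! h
    exact (hX.trans_le (mk_univ.symm.trans_le (mk_le_mk_of_subset fun x _ => h x))).not_ge hA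
  obtain ⟨b, hb⟩ := exists_seq_forall_image_Iio (A := A)
    (P := fun S y => y ∉ S ∧ typeOver S y = typeOver S p)
    fun S hSA hS => ⟨_, hA_closed S hSA hS (mem_image_of_mem _ (mem_range_self p)),
      Function.invFunOn_pos ⟨p, show p ∈ Sᶜ from fun h => hp (hSA h), rfl⟩⟩
  refine ⟨b, p, fun v w hvw => ?_, fun w t ht => ?_⟩
  · by_contra hne
    rcases lt_or_gt_of_ne hne with h | h
    · exact (hb w).1 ⟨v, h, hvw⟩
    · exact (hb v).1 ⟨w, h, hvw.symm⟩
  · simpa [typeOver, Finset.subtype_map_of_mem fun x hx => ht hx] using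
      congrFun (hb w).2 (t.subtype (· ∈ b '' Iio w))

theorem erdos_rado_finset {l : Cardinal.{u}} (hl : ℵ₀ ≤ l) (n : ℕ) {X C : Type u}
    [DecidableEq X] (hX : Order.succ (bethIter l n) ≤ #X) (hC : #C ≤ l) (F : Finset X → C) :
    ∃ (H : Set X) (γ : C), Order.succ l ≤ #H ∧
      ∀ s : Finset X, s.card = n + 1 → ↑s ⊆ H → F s = γ := by
  induction n generalizing X with
  | zero =>
    obtain ⟨γ, hγ⟩ := infinite_pigeonhole_card (fun x => F {x}) (Order.succ l) hX
      (hl.trans (Order.le_succ l))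
      (by rw [(isRegular_succ hl).cof_ord]; exact hC.trans_lt (Order.lt_succ l))
    refine ⟨_, γ, hγ, fun s hs hsH => ?_⟩
    obtain ⟨x, rfl⟩ := Finset.card_eq_one.1 hs
    exact hsH (Finset.mem_singleton_self x)
  | succ n ih =>
    obtain ⟨b, p, hb_inj, hb⟩ := exists_endHomogeneous (hl.trans (le_bethIter l n))
      (hC.trans (le_bethIter l n)) (Order.succ_le_iff.1 hX) F
    obtain ⟨H, γ, hH, hHγ⟩ := ih (X := (Order.succ (bethIter l n)).ord.ToType) (by simp)
      fun u => F (insert p (u.image b))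
    refine ⟨b '' H, γ, by rwa [mk_image_eq hb_inj], fun s hs hsH => ?_⟩
    obtain ⟨u, huH, rfl⟩ := Finset.subset_set_image_iff.1 hsH
    rw [Finset.card_image_of_injective _ hb_inj] at hs
    have hu : u.Nonempty := Finset.card_pos.1 (by omega)
    set m := u.max' hu
    have hu_below : ↑((u.erase m).image b) ⊆ b '' Iio m := by
      rw [Finset.coe_image]
      exact image_mono fun v hv =>
        (u.le_max' v (Finset.mem_of_mem_erase hv)).lt_of_ne (Finset.ne_of_mem_erase hv)
    rw [← Finset.insert_erase (u.max'_mem hu), Finset.image_insert, hb m _ hu_below]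
    exact hHγ _ (by rw [Finset.card_erase_of_mem (u.max'_mem hu)]; omega)
      ((Finset.coe_subset.2 (Finset.erase_subset m u)).trans huH)

/-- **Erdős–Rado theorem.** If `l` is an infinite cardinal, `#X ≥ (ℶ_n(l))⁺`,
and `f` colors the `(n+1)`-element finite subsets of `X` with at most `l`
colors, then there are `H ⊆ X` with `#H ≥ l⁺` and a color `γ` such that every
`(n+1)`-element subset of `H` gets color `γ`. -/
theorem erdos_rado (l : Cardinal.{u}) (hl : ℵ₀ ≤ l) (n : ℕ)
    (X : Type u) (hX : Order.succ (bethIter l n) ≤ #X)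
    (Colors : Type u) (hC : #Colors ≤ l)
    (f : {s : Finset X // s.card = n + 1} → Colors) :
    ∃ (H : Set X) (γ : Colors), Order.succ l ≤ #H ∧
      ∀ s : {s : Finset X // s.card = n + 1}, ↑s.1 ⊆ H → f s = γ := by
  classical
  have : Infinite X := infinite_iff.2
    (hl.trans ((le_bethIter l n).trans ((Order.le_succ _).trans hX)))
  obtain ⟨s₀, hs₀⟩ := Infinite.exists_subset_card_eq X (n + 1)
  obtain ⟨H, γ, hH, hHγ⟩ := erdos_rado_finset hl n hX hC
    fun s => if h : s.card = n + 1 then f ⟨s, h⟩ else f ⟨s₀, hs₀⟩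
  exact ⟨H, γ, hH, fun s hs => by simpa [s.2] using hHγ s.1 s.2 hs⟩
end

section
/- In the category Rel of types and binary relations, every small family of objects has a product: given a type I and a family F : I → Type of objects of Rel, the sigma type P = Σ i, F i together with the projection relations π_i ⊆ P × F i defined by (⟨x, i⟩) π_i y ↔ (x = y), forms a product of the family F in Rel. In particular, Rel has all small products. -/
/-! Composing with the `i`-th projection restricts a relation into `Σ i, F i` to the `i`-th
summand, so the projections are jointly monic and the relations of a cone glue to a single
relation into the sigma type. -/

open CategoryTheory

universe u

namespace CategoryTheory.RelCat

variable {I : Type u} (F : I → RelCat.{u})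

abbrev sigma : RelCat.{u} :=
  Σ i, F i

def sigmaProj (i : I) : sigma F ⟶ F i :=
  Hom.ofRel {q : (Σ i, F i) × F i | q.1 = ⟨i, q.2⟩}

def sigmaLift {N : RelCat.{u}} (R : ∀ i, N ⟶ F i) : N ⟶ sigma F :=
  Hom.ofRel {q : N × (Σ i, F i) | (q.1, q.2.2) ∈ (R q.2.1).rel}

variable {F}

theorem mem_comp_sigmaProj_rel {N : RelCat.{u}} (f : N ⟶ sigma F) (i : I)
    (n : N) (y : F i) : (n, y) ∈ (f ≫ sigmaProj F i).rel ↔ (n, (⟨i, y⟩ : Σ i, F i)) ∈ f.rel := by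
  constructor
  · rintro ⟨p, hnp, rfl : p = ⟨i, y⟩⟩
    exact hnp
  · exact fun h => ⟨⟨i, y⟩, h, rfl⟩

theorem sigmaProj_hom_ext {N : RelCat.{u}} {f g : N ⟶ sigma F}
    (h : ∀ i, f ≫ sigmaProj F i = g ≫ sigmaProj F i) : f = g := by
  ext ⟨n, i, y⟩
  rw [← mem_comp_sigmaProj_rel, ← mem_comp_sigmaProj_rel, h]

theorem sigmaLift_comp_sigmaProj {N : RelCat.{u}} (R : ∀ i, N ⟶ F i) (i : I) :
    sigmaLift F R ≫ sigmaProj F i = R i := by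
  ext ⟨n, y⟩
  exact mem_comp_sigmaProj_rel _ i n y

end CategoryTheory.RelCat

open CategoryTheory.RelCat in
/-- In the category `RelCat` of types and relations, the sigma type
`Σ i, F i`, with the projection relations relating `⟨i, x⟩` to `y : F i`
iff `x = y`, is a product of the family `F`: every cone factors through it
via a unique morphism. In particular `RelCat` has all small products. -/
theorem relCat_sigma_isProduct (I : Type u) (F : I → RelCat.{u}) :
    ∀ (N : RelCat.{u}) (R : ∀ i : I, N ⟶ F i),
      ∃! u : N ⟶ ((Σ i, F i) : RelCat.{u}),
        ∀ i : I, u ≫ RelCat.Hom.ofRel {q : (Σ i, F i) × F i | q.1 = ⟨i, q.2⟩} = R i := by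
  intro N R
  refine ⟨sigmaLift F R, sigmaLift_comp_sigmaProj R, fun v hv => sigmaProj_hom_ext fun i => ?_⟩
  exact (hv i).trans (sigmaLift_comp_sigmaProj R i).symm
end

section
/- (Reflection principle over the universe of ZF sets) Let L be the first-order language with a single binary relation symbol, and regard the type ZFSet of ZF sets as an L-structure by interpreting the relation symbol as membership ∈. Then for every natural number n, every L-formula φ(x₀, …, x_{n−1}) with n free variables, and every A : ZFSet, there exists a ZF set M such that: M is transitive (x ∈ y ∈ M → x ∈ M), M is supertransitive (x ⊆ y ∈ M → x ∈ M), A ∈ M, and for all a₀, …, a_{n−1} ∈ M, the formula φ(a₀, …, a_{n−1}) holds in the induced L-structure on the elements of M if and only if φ(a₀, …, a_{n−1}) holds in the L-structure ZFSet. -/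
/-!
Start from `{A}` and iterate ω times a step that adds the unions of its elements, the powersets
of its elements, and, for every formula `∃ x, ψ(x, v)` with parameters `v` from the current
set that holds in `ZFSet`, a witness `x` chosen by Hilbert's ε. The union `M` of the stages is
transitive and supertransitive, and, since any finitely many parameters from `M` already lie in
one stage, it satisfies the Tarski–Vaught criterion, so the inclusion of `M` into `ZFSet` is an
elementary embedding and reflects every formula.
-/

open FirstOrder

/-- The single binary relation symbol of the language of set theory. -/
inductive MemSym : ℕ → Type
  | mem : MemSym 2

/-- The first-order language with a single binary relation symbol. -/
def memLang : FirstOrder.Language := ⟨fun _ => Empty, MemSym⟩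

/-- `ZFSet` as a `memLang`-structure, interpreting the relation symbol as `∈`. -/
instance : memLang.Structure ZFSet.{u} where
  funMap := fun f _ => f.elim
  RelMap := fun r v => match r with | .mem => v 0 ∈ v 1

/-- Any `M : ZFSet` induces a `memLang`-structure on the elements of `M`. -/
instance (M : ZFSet.{u}) : memLang.Structure {x : ZFSet.{u} // x ∈ M} where
  funMap := fun f _ => f.elim
  RelMap := fun r v => match r with | .mem => (v 0).1 ∈ (v 1).1

open FirstOrder.Language
open scoped ZFSet

def subtypeValEmbedding (M : ZFSet.{u}) : memLang.Embedding {x // x ∈ M} ZFSet.{u} where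
  toFun := Subtype.val
  inj' := Subtype.val_injective
  map_fun' f := nomatch f
  map_rel' r _ := by cases r; rfl

noncomputable def tarskiVaughtWitness {L : Language} {N : Type*} [L.Structure N] [Nonempty N]
    {m : ℕ} (ψ : L.BoundedFormula Empty (m + 1)) (v : Fin m → N) : N :=
  Classical.epsilon fun x => ψ.Realize default (Fin.snoc v x)

theorem realize_tarskiVaughtWitness {L : Language} {N : Type*} [L.Structure N] [Nonempty N]
    {m : ℕ} {ψ : L.BoundedFormula Empty (m + 1)} {v : Fin m → N}
    (h : ∃ x, ψ.Realize default (Fin.snoc v x)) :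
    ψ.Realize default (Fin.snoc v (tarskiVaughtWitness ψ v)) :=
  Classical.epsilon_spec h

-- Parameters range over the elements of `S`, which keeps the index family small.
noncomputable def reflectionStep (S : ZFSet.{u}) : ZFSet.{u} :=
  S ∪ ⋃₀ S ∪ (⋃ y : S, ZFSet.powerset y.1) ∪
    ZFSet.range fun p : Σ m, memLang.BoundedFormula Empty (m + 1) × (Fin m → S) =>
      tarskiVaughtWitness p.2.1 (Subtype.val ∘ p.2.2)

section reflectionStep

variable {S x y : ZFSet.{u}}

theorem subset_reflectionStep : S ⊆ reflectionStep S := fun _ hx => by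
  simp only [reflectionStep, ZFSet.mem_union]
  exact Or.inl <| Or.inl <| Or.inl hx

theorem mem_reflectionStep_of_mem_of_mem (hxy : x ∈ y) (hy : y ∈ S) :
    x ∈ reflectionStep S := by
  simp only [reflectionStep, ZFSet.mem_union, ZFSet.mem_sUnion]
  exact Or.inl <| Or.inl <| Or.inr ⟨y, hy, hxy⟩

theorem mem_reflectionStep_of_subset_of_mem (hxy : x ⊆ y) (hy : y ∈ S) :
    x ∈ reflectionStep S := by
  simp only [reflectionStep, ZFSet.mem_union, ZFSet.mem_iUnion, ZFSet.mem_powerset]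
  exact Or.inl <| Or.inr ⟨⟨y, hy⟩, hxy⟩

theorem tarskiVaughtWitness_mem_reflectionStep {m : ℕ} (ψ : memLang.BoundedFormula Empty (m + 1))
    (v : Fin m → ZFSet.{u}) (hv : ∀ i, v i ∈ S) :
    tarskiVaughtWitness ψ v ∈ reflectionStep S :=
  ZFSet.mem_union.2 <| Or.inr <| ZFSet.mem_range.2 ⟨⟨m, ψ, fun i => ⟨v i, hv i⟩⟩, rfl⟩

end reflectionStep

noncomputable def iterateUnion (f : ZFSet.{u} → ZFSet.{u}) (A : ZFSet.{u}) : ZFSet.{u} :=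
  ⋃ n : ℕ, f^[n] A

section iterateUnion

variable {f : ZFSet.{u} → ZFSet.{u}} {A x : ZFSet.{u}}

theorem mem_iterateUnion : x ∈ iterateUnion f A ↔ ∃ n, x ∈ f^[n] A :=
  ZFSet.mem_iUnion

theorem self_subset_iterateUnion : A ⊆ iterateUnion f A := fun _ hx =>
  mem_iterateUnion.2 ⟨0, hx⟩

theorem mem_iterateUnion_of_mem_apply {n : ℕ} (hx : x ∈ f (f^[n] A)) : x ∈ iterateUnion f A :=
  mem_iterateUnion.2 ⟨n + 1, by rwa [Function.iterate_succ_apply']⟩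

theorem exists_forall_mem_iterate {ι : Type*} [Finite ι] (hf : ∀ S, S ⊆ f S)
    (v : ι → ZFSet.{u}) (hv : ∀ i, v i ∈ iterateUnion f A) :
    ∃ n, ∀ i, v i ∈ f^[n] A := by
  choose level hlevel using fun i => mem_iterateUnion.1 (hv i)
  obtain ⟨n, hn⟩ := Finite.exists_le level
  exact ⟨n, fun i => Function.monotone_iterate_of_id_le hf (hn i) A (hlevel i)⟩

end iterateUnion

noncomputable def reflectingSet (A : ZFSet.{u}) : ZFSet.{u} :=
  iterateUnion reflectionStep {A}

section reflectingSet

variable {A x y : ZFSet.{u}}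

theorem mem_reflectingSet_self : A ∈ reflectingSet A :=
  self_subset_iterateUnion (ZFSet.mem_singleton.2 rfl)

theorem mem_reflectingSet_of_mem_of_mem (hxy : x ∈ y) (hy : y ∈ reflectingSet A) :
    x ∈ reflectingSet A := by
  obtain ⟨n, hn⟩ := mem_iterateUnion.1 hy
  exact mem_iterateUnion_of_mem_apply (mem_reflectionStep_of_mem_of_mem hxy hn)

theorem mem_reflectingSet_of_subset_of_mem (hxy : x ⊆ y) (hy : y ∈ reflectingSet A) :
    x ∈ reflectingSet A := by
  obtain ⟨n, hn⟩ := mem_iterateUnion.1 hy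
  exact mem_iterateUnion_of_mem_apply (mem_reflectionStep_of_subset_of_mem hxy hn)

theorem realize_subtypeValEmbedding_reflectingSet (A : ZFSet.{u}) {n : ℕ}
    (φ : memLang.Formula (Fin n)) (a : Fin n → reflectingSet A) :
    φ.Realize (subtypeValEmbedding _ ∘ a) ↔ φ.Realize a := by
  refine (subtypeValEmbedding _).isElementary_of_exists (fun m ψ v x hx => ?_) φ a
  obtain ⟨k, hk⟩ := exists_forall_mem_iterate (fun _ => subset_reflectionStep)
    (fun i => (v i).1) fun i => (v i).2
  exact ⟨⟨_, mem_iterateUnion_of_mem_apply (tarskiVaughtWitness_mem_reflectionStep ψ _ hk)⟩,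
    realize_tarskiVaughtWitness ⟨x, hx⟩⟩

end reflectingSet

/-- **Reflection principle over the universe of ZF sets.** For every formula
`φ(x₀, …, x_{n-1})` in the language with one binary relation symbol and every
`A : ZFSet`, there is a transitive, supertransitive `M : ZFSet` with `A ∈ M`
that reflects `φ`: for all parameters from `M`, `φ` holds in the induced
structure on the elements of `M` iff it holds in `ZFSet`. -/
theorem zfSet_reflection (n : ℕ) (φ : memLang.Formula (Fin n)) (A : ZFSet.{u}) :
    ∃ M : ZFSet.{u},
      (∀ x y : ZFSet.{u}, x ∈ y → y ∈ M → x ∈ M) ∧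
      (∀ x y : ZFSet.{u}, x ⊆ y → y ∈ M → x ∈ M) ∧
      A ∈ M ∧
      ∀ a : Fin n → {x : ZFSet.{u} // x ∈ M},
        φ.Realize a ↔ φ.Realize (fun i => (a i).1) :=
  ⟨reflectingSet A, fun _ _ => mem_reflectingSet_of_mem_of_mem,
    fun _ _ => mem_reflectingSet_of_subset_of_mem, mem_reflectingSet_self,
    fun a => (realize_subtypeValEmbedding_reflectingSet A φ a).symm⟩
end
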